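/- Let G be a CADMG and B ⊆ V a bidirected-connected set whose intrinsic closure I_G(B) is bidirected-connected (hence an intrinsic set). Then the recursive head H = sterile_G(I_G(B)) of the intrinsic set I_G(B) satisfies H ⊆ B. -/

import Mathlib

open Classical

noncomputable section

/-- A conditional acyclic directed mixed graph (CADMG): disjoint sets of random
vertices `V` and fixed vertices `W`, directed edges into `V` with no loops or
directed cycles, symmetric bidirected edges between distinct random vertices,
and every fixed vertex has at least one child. -/
structure CADMG (α : Type) where
  V : Set α
  W : Set α
  dir : Set (α × α)
  bi : Set (α × α)
  disjointVW : Disjoint V W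
  dir_mem : ∀ e ∈ dir, e.1 ∈ V ∪ W ∧ e.2 ∈ V
  dir_irrefl : ∀ e ∈ dir, e.1 ≠ e.2
  acyclic : ∀ a b : α, Relation.ReflTransGen (fun x y => (x, y) ∈ dir) a b →
      Relation.ReflTransGen (fun x y => (x, y) ∈ dir) b a → a = b
  bi_symm : ∀ a b : α, (a, b) ∈ bi → (b, a) ∈ bi
  bi_mem : ∀ e ∈ bi, e.1 ∈ V ∧ e.2 ∈ V
  bi_irrefl : ∀ e ∈ bi, e.1 ≠ e.2
  fixed_child : ∀ w ∈ W, ∃ v, (w, v) ∈ dir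

namespace CADMG

variable {α : Type}

/-- The parents of a vertex. -/
def pa (G : CADMG α) (b : α) : Set α := {a | (a, b) ∈ G.dir}

/-- The parents of a set of vertices. -/
def paSet (G : CADMG α) (A : Set α) : Set α := {a | ∃ b ∈ A, (a, b) ∈ G.dir}

/-- The ancestors of a set of vertices (every vertex is its own ancestor). -/
def anc (G : CADMG α) (A : Set α) : Set α :=
  {w | ∃ v ∈ A, Relation.ReflTransGen (fun x y => (x, y) ∈ G.dir) w v}

/-- An ancestral set contains all of its own ancestors. -/
def Ancestral (G : CADMG α) (A : Set α) : Prop := G.anc A = A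

/-- A random-ancestral set: a set of random vertices all of whose ancestors are
in the set itself or fixed. -/
def RandomAncestral (G : CADMG α) (A : Set α) : Prop :=
  A ⊆ G.V ∧ G.anc A ⊆ A ∪ G.W

/-- The sterile subset of `C`: those members of `C` that are not parents of `C`. -/
def sterile (G : CADMG α) (C : Set α) : Set α := C \ G.paSet C

/-- A bidirected-connected set of random vertices: every two members are joined by
a path of bidirected edges with all intermediate vertices inside the set. -/
def BiConn (G : CADMG α) (B : Set α) : Prop :=
  B ⊆ G.V ∧ ∀ a ∈ B, ∀ b ∈ B,
    Relation.ReflTransGen (fun x y => (x, y) ∈ G.bi ∧ x ∈ B ∧ y ∈ B) a b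

/-- A district: a maximal bidirected-connected set of random vertices. -/
def IsDistrict (G : CADMG α) (D : Set α) : Prop :=
  D.Nonempty ∧ G.BiConn D ∧ ∀ D', G.BiConn D' → D ⊆ D' → D' = D

/-- `dis G B`: the union of the districts of `G` meeting `B`. -/
def dis (G : CADMG α) (B : Set α) : Set α :=
  ⋃₀ {D | G.IsDistrict D ∧ (D ∩ B).Nonempty}

/-- The induced graph `G[C]`: random vertices `C`, fixed vertices `pa_G(C) \ C`,
the bidirected edges of `G` within `C` and the directed edges of `G` pointing
into `C`. -/
def induce (G : CADMG α) (C : Set α) : CADMG α where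
  V := C ∩ G.V
  W := G.paSet (C ∩ G.V) \ (C ∩ G.V)
  dir := {e | e ∈ G.dir ∧ e.2 ∈ C ∩ G.V}
  bi := {e | e ∈ G.bi ∧ e.1 ∈ C ∩ G.V ∧ e.2 ∈ C ∩ G.V}
  disjointVW := by
    rw [Set.disjoint_left]; rintro a ha ⟨-, h⟩; exact h ha
  dir_mem := by
    rintro e ⟨he, h2⟩
    refine ⟨?_, h2⟩
    by_cases h1 : e.1 ∈ C ∩ G.V
    · exact Or.inl h1
    · exact Or.inr ⟨⟨e.2, h2, he⟩, h1⟩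
  dir_irrefl := fun e he => G.dir_irrefl e he.1
  acyclic := fun a b h1 h2 =>
    G.acyclic a b (h1.lift id fun x y h => h.1) (h2.lift id fun x y h => h.1)
  bi_symm := fun a b h => ⟨G.bi_symm a b h.1, h.2.2, h.2.1⟩
  bi_mem := fun e he => ⟨he.2.1, he.2.2⟩
  bi_irrefl := fun e he => G.bi_irrefl e he.1
  fixed_child := by
    rintro w ⟨⟨b, hb, hwb⟩, -⟩
    exact ⟨b, hwb, hb⟩

/-- A CADMG `G'` is reachable from `G` if it is obtained by iteratively
restricting to a district (`𝔡`) or to a random-ancestral set (`𝔪`). -/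
inductive Reach : CADMG α → CADMG α → Prop where
  | refl (G : CADMG α) : Reach G G
  | district {G₁ G₂ : CADMG α} {D : Set α} :
      Reach G₁ G₂ → G₂.IsDistrict D → Reach G₁ (G₂.induce D)
  | margin {G₁ G₂ : CADMG α} {A : Set α} :
      Reach G₁ G₂ → G₂.RandomAncestral A → Reach G₁ (G₂.induce A)

/-- `G₁` is a subgraph of `G₂`. -/
def Subgraph (G₁ G₂ : CADMG α) : Prop :=
  G₁.V ⊆ G₂.V ∧ G₁.W ⊆ G₂.W ∧ G₁.dir ⊆ G₂.dir ∧ G₁.bi ⊆ G₂.bi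

/-- An intrinsic set: a nonempty bidirected-connected set `S` of random vertices
such that `G[S]` is reachable from `G`. -/
def Intrinsic (G : CADMG α) (S : Set α) : Prop :=
  S.Nonempty ∧ G.BiConn S ∧ Reach G (G.induce S)

/-- The recursive heads of `G`: sterile subsets of intrinsic sets. -/
def heads (G : CADMG α) : Set (Set α) :=
  {H | ∃ S, G.Intrinsic S ∧ G.sterile S = H}

/-- The (unique) intrinsic set whose recursive head is `H`. -/
def intrinsicOf (G : CADMG α) (H : Set α) : Set α :=
  ⋃₀ {S | G.Intrinsic S ∧ G.sterile S = H}

/-- The partial order on recursive heads: `H₁ ≺ H₂` iff the intrinsic set of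
`H₁` is strictly contained in that of `H₂`. -/
def headLT (G : CADMG α) (H₁ H₂ : Set α) : Prop :=
  G.intrinsicOf H₁ ⊂ G.intrinsicOf H₂

/-- The tail of a recursive head: the parents of its intrinsic set. -/
def tail (G : CADMG α) (H : Set α) : Set α := G.paSet (G.intrinsicOf H)

/-- One step of the intrinsic-closure iteration: restrict to the ancestors of
`B`, then to the districts meeting `B`. -/
def closureStep (B : Set α) (G : CADMG α) : CADMG α :=
  (G.induce (G.anc B)).induce ((G.induce (G.anc B)).dis B)

/-- The intrinsic closure `I_G(B)`: the random vertex set of the stable graph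
obtained by repeatedly alternating restriction to the ancestors of `B` and to
the districts meeting `B`.  (After `Fintype.card α` rounds the iteration has
stabilised.) -/
def intrinsicClosure [Fintype α] (G : CADMG α) (B : Set α) : Set α :=
  ((closureStep B)^[Fintype.card α] G).V

/-- `Φ_G(C)`: the `≺`-maximal recursive heads of `G` contained in `C`. -/
def Phi (G : CADMG α) (C : Set α) : Set (Set α) :=
  {H | H ∈ G.heads ∧ H ⊆ C ∧ ∀ H' ∈ G.heads, H' ⊆ C → H' ≠ H → ¬ G.headLT H H'}

/-- `ψ_G(C) = C \ ⋃ Φ_G(C)`. -/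
def psi (G : CADMG α) (C : Set α) : Set α := C \ ⋃₀ G.Phi C

/-- The recursive-head partition `⟨C⟩_G`, defined by `⟨∅⟩ = ∅` and
`⟨C⟩ = Φ(C) ∪ ⟨ψ(C)⟩`.  (The guard on cardinalities is automatically satisfied
whenever the recursion is used, since `ψ_G(C) ⊊ C` for nonempty `C`.) -/
def partn (G : CADMG α) (C : Set α) : Set (Set α) :=
  if C = ∅ then ∅
  else if h : (G.psi C).ncard < C.ncard then G.Phi C ∪ G.partn (G.psi C)
  else G.Phi C
termination_by C.ncard
decreasing_by exact h

/-- A kernel `p_{V|W}`, written as a function of a full assignment of binary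
values to all vertices: it takes values in `[0,1]`, depends only on the
coordinates in `V ∪ W`, and for every assignment to `W` (and the remaining
coordinates) the values summed over assignments to `V` equal `1`. -/
def IsKernel [Fintype α] (V W : Set α) (p : (α → Bool) → ℝ) : Prop :=
  (∀ x, 0 ≤ p x ∧ p x ≤ 1) ∧
  (∀ x y : α → Bool, (∀ v ∈ V ∪ W, x v = y v) → p x = p y) ∧
  (∀ x : α → Bool, ∑ g : α → Bool,
      (if ∀ v, v ∉ V → g v = x v then p g else 0) = 1)

/-- Sum a function of assignments over all values of the coordinates in `D`
(the marginal summing out the variables in `D`). -/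
def marginOut [Fintype α] (D : Set α) (p : (α → Bool) → ℝ) (x : α → Bool) : ℝ :=
  ∑ g : α → Bool, if ∀ v, v ∉ D → g v = x v then p g else 0

/-- `q` is a version of the conditional kernel of `A` given `B` and `W`, derived
from the kernel `p = p_{V|W}`. -/
def IsCondVersion [Fintype α] (V W A B : Set α)
    (p q : (α → Bool) → ℝ) : Prop :=
  IsKernel A (B ∪ W) q ∧
  ∀ x : α → Bool, q x * marginOut (V \ B) p x = marginOut (V \ (A ∪ B)) p x

/-- Recursive factorization of a kernel `p` according to a CADMG `G`
(the nested Markov property): either `|V| = 1`, or (i) `p` factorizes into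
kernels indexed by the districts of `G`, each of which (when there are at least
two districts) recursively factorizes according to the induced graph, and
(ii) for every ancestral set `A` with `V \ A ≠ ∅` the margin over `A` does not
depend on the fixed coordinates outside `A` and recursively factorizes
according to `G[V ∩ A]`. -/
inductive RF [Fintype α] : CADMG α → ((α → Bool) → ℝ) → Prop where
  | base (G : CADMG α) (p : (α → Bool) → ℝ) (h : G.V.ncard = 1) : RF G p
  | factor (G : CADMG α) (p : (α → Bool) → ℝ)
      (Ds : Finset (Set α)) (r : Set α → (α → Bool) → ℝ)
      (hDs : ∀ D, G.IsDistrict D ↔ D ∈ Ds)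
      (hker : ∀ D ∈ Ds, IsKernel D (G.paSet D \ D) (r D))
      (hfact : ∀ x, p x = ∏ D ∈ Ds, r D x)
      (hrec : 2 ≤ Ds.card → ∀ D ∈ Ds, RF (G.induce D) (r D))
      (hmarg_nodep : ∀ A : Set α, G.Ancestral A → (G.V \ A).Nonempty →
        ∀ x y : α → Bool, (∀ v ∈ (G.V ∩ A) ∪ (G.W ∩ A), x v = y v) →
          marginOut (G.V \ A) p x = marginOut (G.V \ A) p y)
      (hmarg_rf : ∀ A : Set α, G.Ancestral A → (G.V \ A).Nonempty →
        RF (G.induce (G.V ∩ A)) (marginOut (G.V \ A) p)) :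
      RF G p

/-- The alternating sum `Σ_{O ⊆ C ⊆ U} (−1)^{|C\O|} ∏_{H ∈ ⟨C⟩_G} q_H(x_T)`. -/
def altSum (G : CADMG α) (q : Set α → (α → Bool) → ℝ) (x : α → Bool)
    (O U : Set α) : ℝ :=
  ∑ᶠ C ∈ {C : Set α | O ⊆ C ∧ C ⊆ U},
    (-1 : ℝ) ^ (C \ O).ncard * ∏ᶠ H ∈ G.partn C, q H x

/-- A kernel `p` is parameterized according to `G`: there are parameters
`q_H(x_T)` (one real number for each recursive head `H` and each value `x_T` of
its tail `T`) with
`p(x_V | x_W) = Σ_{O ⊆ C ⊆ V} (−1)^{|C\O|} ∏_{H ∈ ⟨C⟩_G} q_H(x_T)`,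
where `O = {v ∈ V : x_v = 0}`. -/
def Parameterized [Fintype α] (G : CADMG α) (p : (α → Bool) → ℝ) : Prop :=
  ∃ q : Set α → (α → Bool) → ℝ,
    (∀ H ∈ G.heads, ∀ x y : α → Bool,
        (∀ v ∈ G.tail H, x v = y v) → q H x = q H y) ∧
    ∀ x : α → Bool,
      p x = G.altSum q x {v | v ∈ G.V ∧ x v = false} G.V

end CADMG

/-!
Each round of the closure iteration that changes the graph removes a random vertex, so
after `Fintype.card α` rounds the graph `S` is stable. In particular restricting `S` to the
ancestors of `B` removes nothing: every vertex of `I_G(B) = V(S)` is an ancestor of `B` in `S`.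
A vertex of `I_G(B)` outside `B` thus starts a directed path of `S` towards `B`, whose first
edge (also an edge of `G`) makes it a parent of `I_G(B)`, so it is not sterile.
-/

theorem Function.isFixedPt_iterate_of_measure {β : Type*} {f : β → β} (μ : β → ℕ)
    (hdecr : ∀ x, f x ≠ x → μ (f x) < μ x) {n : ℕ} {x : β} (hn : μ x ≤ n) :
    Function.IsFixedPt f (f^[n] x) := by
  induction n generalizing x with
  | zero =>
    rw [Function.iterate_zero_apply]
    by_contra hx
    have := hdecr x hx
    omega
  | succ m ih =>
    by_cases hx : f x = x
    · rw [Function.iterate_fixed hx]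
      exact hx
    · rw [Function.iterate_succ_apply]
      exact ih (by have := hdecr x hx; omega)

namespace CADMG

variable {α : Type}

@[ext]
lemma ext {G₁ G₂ : CADMG α} (hV : G₁.V = G₂.V) (hW : G₁.W = G₂.W)
    (hdir : G₁.dir = G₂.dir) (hbi : G₁.bi = G₂.bi) : G₁ = G₂ := by
  cases G₁; cases G₂; simp_all

lemma paSet_V_sdiff_V (G : CADMG α) : G.paSet G.V \ G.V = G.W := by
  ext a
  constructor
  · rintro ⟨⟨b, -, hab⟩, ha⟩
    exact ((G.dir_mem _ hab).1).resolve_left ha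
  · intro ha
    obtain ⟨v, hv⟩ := G.fixed_child a ha
    exact ⟨⟨v, (G.dir_mem _ hv).2, hv⟩, fun hav => G.disjointVW.le_bot ⟨hav, ha⟩⟩

lemma induce_eq_self (G : CADMG α) {C : Set α} (h : G.V ⊆ C) : G.induce C = G := by
  have hCV : C ∩ G.V = G.V := Set.inter_eq_right.mpr h
  ext e
  · exact Set.ext_iff.mp hCV e
  · show e ∈ G.paSet (C ∩ G.V) \ (C ∩ G.V) ↔ e ∈ G.W
    rw [hCV, paSet_V_sdiff_V]
  · have he2 : e ∈ G.dir → e.2 ∈ G.V := fun he => (G.dir_mem e he).2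
    exact ⟨fun he => he.1, fun he => ⟨he, h (he2 he), he2 he⟩⟩
  · have hbi : e ∈ G.bi → e.1 ∈ G.V ∧ e.2 ∈ G.V := G.bi_mem e
    exact ⟨fun he => he.1,
      fun he => ⟨he, ⟨h (hbi he).1, (hbi he).1⟩, ⟨h (hbi he).2, (hbi he).2⟩⟩⟩

lemma sterile_subset_of_dir_subset {G H : CADMG α} (hdir : H.dir ⊆ G.dir) (C : Set α) :
    G.sterile C ⊆ H.sterile C :=
  fun _ ⟨hvC, hv⟩ => ⟨hvC, fun ⟨u, huC, hvu⟩ => hv ⟨u, huC, hdir hvu⟩⟩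

lemma sterile_V_subset_of_V_subset_anc (H : CADMG α) {B : Set α} (h : H.V ⊆ H.anc B) :
    H.sterile H.V ⊆ B := by
  rintro v ⟨hvV, hv⟩
  obtain ⟨b, hbB, hpath⟩ := h hvV
  rcases hpath.cases_head with rfl | ⟨u, hvu, -⟩
  · exact hbB
  · exact absurd ⟨u, (H.dir_mem _ hvu).2, hvu⟩ hv

variable (B : Set α)

lemma closureStep_V_subset (G : CADMG α) : (closureStep B G).V ⊆ G.V :=
  fun _ hv => hv.2.2

lemma closureStep_V_subset_anc (G : CADMG α) : (closureStep B G).V ⊆ G.anc B :=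
  fun _ hv => hv.2.1

lemma iterate_closureStep_dir_subset (G : CADMG α) (k : ℕ) :
    ((closureStep B)^[k] G).dir ⊆ G.dir := by
  induction k with
  | zero => exact subset_rfl
  | succ k ih =>
    rw [Function.iterate_succ_apply']
    exact fun _ he => ih he.1.1

lemma closureStep_eq_self_of_V_eq {G : CADMG α} (h : (closureStep B G).V = G.V) :
    closureStep B G = G := by
  have hanc : G.induce (G.anc B) = G :=
    G.induce_eq_self (h ▸ closureStep_V_subset_anc B G)
  have hstep : closureStep B G = G.induce (G.dis B) := by
    rw [closureStep, hanc]
  rw [hstep] at h ⊢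
  exact G.induce_eq_self (Set.inter_eq_right.mp h)

lemma isFixedPt_iterate_closureStep [Fintype α] (G : CADMG α) :
    Function.IsFixedPt (closureStep B) ((closureStep B)^[Fintype.card α] G) := by
  refine Function.isFixedPt_iterate_of_measure (fun H : CADMG α => H.V.ncard) ?_ ?_
  · intro H hH
    have hne : (closureStep B H).V ≠ H.V := fun h => hH (closureStep_eq_self_of_V_eq B h)
    exact Set.ncard_lt_ncard ((closureStep_V_subset B H).ssubset_of_ne hne)
  · simpa only [Nat.card_eq_fintype_card] using Set.ncard_le_card G.V

end CADMG

theorem sterile_intrinsicClosure_subset_general {α : Type} [Fintype α]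
    (G : CADMG α) (B : Set α) :
    G.sterile (G.intrinsicClosure B) ⊆ B := by
  set S := (CADMG.closureStep B)^[Fintype.card α] G
  have hfix : CADMG.closureStep B S = S := CADMG.isFixedPt_iterate_closureStep B G
  have hS : S.V ⊆ S.anc B := by
    calc S.V = (CADMG.closureStep B S).V := by rw [hfix]
      _ ⊆ S.anc B := CADMG.closureStep_V_subset_anc B S
  calc G.sterile S.V ⊆ S.sterile S.V :=
        CADMG.sterile_subset_of_dir_subset (CADMG.iterate_closureStep_dir_subset B G _) _
    _ ⊆ B := S.sterile_V_subset_of_V_subset_anc hS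

/-- **Proposition 3 (the head of the intrinsic closure lies in the set).**
If `B` is a bidirected-connected set of random vertices whose intrinsic
closure `I_G(B)` is bidirected-connected (hence an intrinsic set), then the
recursive head `H = sterile_G(I_G(B))` of `I_G(B)` satisfies `H ⊆ B`. -/
theorem sterile_intrinsicClosure_subset {α : Type} [Fintype α]
    (G : CADMG α) (B : Set α) (hB : G.BiConn B)
    (hI : G.BiConn (G.intrinsicClosure B)) :
    G.sterile (G.intrinsicClosure B) ⊆ B :=
  sterile_intrinsicClosure_subset_general G B
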